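/- arXiv:1408.5495 — 2 statements merged into one kernel-verified Lean document; each statement's English description precedes it below -/
import Mathlib

section
/- For every m ≥ 0 the word A_m with its last letter removed is a palindrome; consequently, for every m ≥ 1 and i ∈ {1,2} the envelope word E_{m,i} is a palindrome. -/
namespace PD

/-- The period-doubling substitution on the alphabet `Bool`,
where `false` stands for the letter `a` and `true` for the letter `b`:
`σ(a) = ab`, `σ(b) = aa`. -/
def sub : Bool → List Bool
  | false => [false, true]
  | true  => [false, false]

/-- The substitution applied to a finite word. -/
def subW (w : List Bool) : List Bool := w.flatMap sub

/-- `A m = σ^m(a)`. -/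
def A (m : ℕ) : List Bool := subW^[m] [false]

/-- `B m = σ^m(b)`. -/
def B (m : ℕ) : List Bool := subW^[m] [true]

/-- The doubling sequence `D∞` (0-indexed: `D n` is the `(n+1)`-th letter),
the fixed point of `σ` beginning with `a`; `A m` is a prefix of `A (m+1)`,
and `A (n+1)` has length `2^(n+1) > n`. -/
def D (n : ℕ) : Bool := (A (n + 1)).getD n false

/-- `δ m`, the last letter of `A m`. -/
def delta (m : ℕ) : Bool := (A m).getLastD false

/-- The envelope words (`i ∈ {1,2}`): `E m 1 = A m` minus its last letter,
`E m 2 = A (m-1) ++ (A m` minus its last letter `)`. -/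
def E (m i : ℕ) : List Bool :=
  if i = 1 then (A m).dropLast else A (m - 1) ++ (A m).dropLast

/-- `w` occurs at the (1-indexed) position `j` in the finite word `τ`. -/
def OccursIn (w τ : List Bool) (j : ℕ) : Prop :=
  1 ≤ j ∧ (τ.drop (j - 1)).take w.length = w

/-- `w` occurs at the (1-indexed) position `j` in the doubling sequence. -/
def OccursD (w : List Bool) (j : ℕ) : Prop :=
  1 ≤ j ∧ ∀ k < w.length, D (j - 1 + k) = w.getD k false

/-- `w` is a factor of the doubling sequence. -/
def FactorD (w : List Bool) : Prop := ∃ j, OccursD w j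

/-- `L w p`: the (1-indexed) starting position of the `p`-th occurrence of `w`
in the doubling sequence, occurrences being ordered by starting position.
(Each factor occurs infinitely often, so `Nat.nth` enumerates all occurrences
in increasing order.) -/
noncomputable def L (w : List Bool) (p : ℕ) : ℕ := Nat.nth (OccursD w) (p - 1)

/-- The strict total order on envelope words:
`E m₁ i₁ ⊏ E m₂ i₂` iff `m₁ < m₂`, or `m₁ = m₂` and `i₁ < i₂`. -/
def EnvLt (m₁ i₁ m₂ i₂ : ℕ) : Prop := m₁ < m₂ ∨ (m₁ = m₂ ∧ i₁ < i₂)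

/-- `Env(w) = E m i`: the envelope word `E m i` is the `⊏`-minimal envelope
word containing `w` as a factor. -/
def IsEnv (w : List Bool) (m i : ℕ) : Prop :=
  1 ≤ m ∧ (i = 1 ∨ i = 2) ∧ w <:+: E m i ∧
    ∀ m' i', 1 ≤ m' → (i' = 1 ∨ i' = 2) → EnvLt m' i' m i → ¬ w <:+: E m' i'

/-- The substitution `φ₁(a) = a`, `φ₁(b) = bb`. -/
def phi1 : Bool → List Bool
  | false => [false]
  | true  => [true, true]

/-- `Θ₁ = φ₁(D∞)` (0-indexed): `φ₁(A (n+1))` is a prefix of `Θ₁` of length `> n`. -/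
def Theta1 (n : ℕ) : Bool := ((A (n + 1)).flatMap phi1).getD n false

/-- The substitution `φ₂(a) = ab`, `φ₂(b) = acac`, over the alphabet `Fin 3`
where `0` stands for `a`, `1` for `b` and `2` for `c`. -/
def phi2 : Bool → List (Fin 3)
  | false => [0, 1]
  | true  => [0, 2, 0, 2]

/-- `Θ₂ = φ₂(D∞)` (0-indexed). -/
def Theta2 (n : ℕ) : Fin 3 := ((A (n + 1)).flatMap phi2).getD n 0

/-- `N₁(x,p)`: the number of letters `x` among the first `p` letters of `Θ₁`. -/
def N1 (x : Bool) (p : ℕ) : ℕ := ((List.range p).map Theta1).count x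

/-- `N₂(x,p)`: the number of letters `x` among the first `p` letters of `Θ₂`. -/
def N2 (x : Fin 3) (p : ℕ) : ℕ := ((List.range p).map Theta2).count x

end PD

open PD

/-! Since `σ(a) = ab`, `A (m+1) = A m ++ B m`, and `A m`, `B m` differ only in their last
letter. Writing `A m = w x`, the word `A (m+1)` minus its last letter is `w x w` and
`E (m+1) 2 = w x w x w`; both are palindromes once `w` is, which closes an induction on `m`. -/

namespace List.Palindrome

variable {α : Type*} {l m : List α}

theorem append_append (hl : l.Palindrome) (hm : m.Palindrome) : (l ++ m ++ l).Palindrome :=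
  of_reverse_eq <| by simp [hl.reverse_eq, hm.reverse_eq]

end List.Palindrome

namespace PD

lemma subW_append (u v : List Bool) : subW (u ++ v) = subW u ++ subW v :=
  List.flatMap_append

lemma subW_append_singleton (w : List Bool) (x : Bool) :
    subW (w ++ [x]) = subW w ++ [false, !x] := by
  rw [subW_append]
  cases x <;> rfl

lemma subW_iterate_append (n : ℕ) (u v : List Bool) :
    subW^[n] (u ++ v) = subW^[n] u ++ subW^[n] v := by
  induction n generalizing u v with
  | zero => rfl
  | succ n ih => rw [Function.iterate_succ_apply, subW_append, ih]; rfl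

lemma A_succ (m : ℕ) : A (m + 1) = subW (A m) :=
  Function.iterate_succ_apply' subW m [false]

lemma B_succ (m : ℕ) : B (m + 1) = subW (B m) :=
  Function.iterate_succ_apply' subW m [true]

lemma A_succ_eq_append (m : ℕ) : A (m + 1) = A m ++ B m :=
  subW_iterate_append m [false] [true]

/-- `σ` maps two words differing only in their last letter to two such words. -/
lemma exists_A_eq_and_B_eq (m : ℕ) : ∃ w x, A m = w ++ [x] ∧ B m = w ++ [!x] := by
  induction m with
  | zero => exact ⟨[], false, rfl, rfl⟩
  | succ m ih =>
    obtain ⟨w, x, hA, hB⟩ := ih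
    refine ⟨subW w ++ [false], !x, ?_, ?_⟩
    · rw [A_succ, hA, subW_append_singleton]
      simp
    · rw [B_succ, hB, subW_append_singleton]
      simp

lemma dropLast_A_succ (m : ℕ) : (A (m + 1)).dropLast = A m ++ (A m).dropLast := by
  obtain ⟨w, x, hA, hB⟩ := exists_A_eq_and_B_eq m
  rw [A_succ_eq_append, hB, hA, List.dropLast_concat, ← List.append_assoc,
    List.dropLast_concat]

lemma palindrome_dropLast_A (m : ℕ) : (A m).dropLast.Palindrome := by
  induction m with
  | zero => exact List.Palindrome.nil
  | succ m ih =>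
    obtain ⟨w, x, hA, -⟩ := exists_A_eq_and_B_eq m
    rw [hA, List.dropLast_concat] at ih
    rw [dropLast_A_succ, hA, List.dropLast_concat]
    exact ih.append_append (.singleton x)

lemma palindrome_E_two (m : ℕ) (hm : 1 ≤ m) : (E m 2).Palindrome := by
  obtain ⟨k, rfl⟩ := Nat.exists_eq_add_of_le' hm
  obtain ⟨w, x, hA, -⟩ := exists_A_eq_and_B_eq k
  have hw : w.Palindrome := by
    simpa [hA] using palindrome_dropLast_A k
  have hE : E (k + 1) 2 = w ++ ([x] ++ w ++ [x]) ++ w := by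
    simp [E, dropLast_A_succ, hA]
  rw [hE]
  exact hw.append_append ((List.Palindrome.singleton x).append_append hw)

end PD

/-- For every `m ≥ 0` the word `A m` with its last letter removed is a palindrome;
consequently every envelope word `E m i` (`m ≥ 1`, `i ∈ {1,2}`) is a palindrome. -/
theorem doubling_palindromes :
    (∀ m : ℕ, List.Palindrome (A m).dropLast) ∧
      (∀ m : ℕ, 1 ≤ m → ∀ i : ℕ, i = 1 ∨ i = 2 → List.Palindrome (E m i)) := by
  refine ⟨palindrome_dropLast_A, fun m hm i hi => ?_⟩
  rcases hi with rfl | rfl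
  · exact palindrome_dropLast_A m
  · exact palindrome_E_two m hm
end

section
/- For every m ≥ 1: (1) E_{m,1} occurs in E_{m+1,1} at exactly two positions, 1 and 2^m+1; (2) E_{m,1} occurs in E_{m,2} at exactly two positions, 1 and 2^{m−1}+1; (3) E_{m,2} occurs in E_{m+2,1} at exactly two positions, 2^m+1 and 3·2^{m−1}+1; (4) E_{m,2} occurs in E_{m+2,2} at exactly four positions, 2^m+1, 3·2^{m−1}+1, 3·2^m+1 and 7·2^{m−1}+1. -/
open PD

/-!
Both families of envelope words obey the same recursion `E (m+1) i = σ(E m i) a`, with `σ(u) a`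
written `subWa u`. In `σ(ρ) a` the letter `b` can only stand at even (1-indexed) positions, and
`σ(u) a` contains a `b` as soon as `u` contains an `a`; hence for such `u` an occurrence of
`σ(u) a` in `σ(ρ) a` must start at an odd position `2t - 1`, and it does exactly when `u` occurs
in `ρ` at position `t`. Iterating, every position set in the theorem is the image of the
corresponding set for `m = 1` under `t ↦ 2^(m-1) (t - 1) + 1`, and the four base cases are
finite computations.
-/

namespace PD

instance (w τ : List Bool) (j : ℕ) : Decidable (OccursIn w τ j) := by
  unfold OccursIn; infer_instance

def subWa (u : List Bool) : List Bool := subW u ++ [false]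

lemma subW_cons (x : Bool) (u : List Bool) : subW (x :: u) = false :: (!x) :: subW u := by
  cases x <;> rfl

lemma subWa_nil : subWa [] = [false] := rfl

lemma subWa_cons (x : Bool) (u : List Bool) : subWa (x :: u) = false :: (!x) :: subWa u := by
  simp [subWa, subW_cons]

lemma subWa_eq_cons_tail (u : List Bool) : subWa u = false :: (subWa u).tail := by
  cases u <;> simp [subWa_nil, subWa_cons]

lemma false_mem_subWa (u : List Bool) : false ∈ subWa u := by
  simp [subWa]

lemma subW_append_subWa (u v : List Bool) : subW u ++ subWa v = subWa (u ++ v) := by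
  simp [subWa, subW]

lemma subWa_length (u : List Bool) : (subWa u).length = 2 * u.length + 1 := by
  induction u with
  | nil => rfl
  | cons x u ih => simp [subWa_cons, ih]; ring

lemma dropLast_subW {w : List Bool} (hw : w ≠ []) : (subW w).dropLast = subWa w.dropLast := by
  obtain ⟨w, x, rfl⟩ := (List.eq_nil_or_concat w).resolve_left hw
  cases x <;> simp [subW, subWa, sub]

lemma drop_two_mul_subWa {ρ : List Bool} {s : ℕ} (hs : s ≤ ρ.length) :
    (subWa ρ).drop (2 * s) = subWa (ρ.drop s) := by
  induction ρ generalizing s with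
  | nil => simp_all
  | cons x ρ ih =>
    cases s with
    | zero => rfl
    | succ s => simpa [subWa_cons, Nat.mul_succ] using ih (by simpa using hs)

lemma subWa_prefix_subWa_iff {u v : List Bool} : subWa u <+: subWa v ↔ u <+: v := by
  induction u generalizing v with
  | nil => rw [subWa_nil, subWa_eq_cons_tail v]; simp
  | cons x u ih => cases v <;> simp [subWa_nil, subWa_cons, ih]

lemma not_subWa_prefix_tail_subWa {u : List Bool} (hu : false ∈ u) (v : List Bool) :
    ¬ subWa u <+: (subWa v).tail := by
  induction u generalizing v with
  | nil => simp at hu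
  | cons x u ih =>
    cases v with
    | nil => simp [subWa_nil, subWa_cons]
    | cons y v =>
      rw [subWa_cons, subWa_cons, List.tail_cons, subWa_eq_cons_tail v]
      cases x <;> simp_all

lemma A_ne_nil (m : ℕ) : A m ≠ [] := by
  induction m with
  | zero => simp [A]
  | succ m ih =>
    obtain ⟨x, u, hxu⟩ := List.exists_cons_of_ne_nil ih
    rw [A_succ, hxu, subW_cons]
    exact List.cons_ne_nil _ _

lemma E_one_succ (m : ℕ) : E (m + 1) 1 = subWa (E m 1) := by
  rw [E, E, if_pos rfl, if_pos rfl, A_succ, dropLast_subW (A_ne_nil m)]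

lemma E_two_succ {m : ℕ} (hm : 1 ≤ m) : E (m + 1) 2 = subWa (E m 2) := by
  obtain ⟨m, rfl⟩ := Nat.exists_eq_add_of_le' hm
  show A (m + 1) ++ (A (m + 2)).dropLast = subWa (A m ++ (A (m + 1)).dropLast)
  rw [A_succ (m + 1), dropLast_subW (A_ne_nil _), ← subW_append_subWa, ← A_succ]

lemma E_one_add (n k : ℕ) : E (k + n) 1 = subWa^[k] (E n 1) := by
  induction k with
  | zero => rw [zero_add]; rfl
  | succ k ih => rw [Nat.succ_add, E_one_succ, ih, Function.iterate_succ_apply']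

lemma E_two_add {n : ℕ} (hn : 1 ≤ n) (k : ℕ) : E (k + n) 2 = subWa^[k] (E n 2) := by
  induction k with
  | zero => rw [zero_add]; rfl
  | succ k ih => rw [Nat.succ_add, E_two_succ (by omega), ih, Function.iterate_succ_apply']

lemma occursIn_iff_prefix {w τ : List Bool} {j : ℕ} :
    OccursIn w τ j ↔ 1 ≤ j ∧ w <+: τ.drop (j - 1) := by
  rw [OccursIn, List.prefix_iff_eq_take, eq_comm]

lemma lt_length_of_prefix_drop {w τ : List Bool} {p : ℕ} (hw : w ≠ []) (h : w <+: τ.drop p) :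
    p < τ.length := by
  by_contra! hp
  rw [List.drop_eq_nil_of_le hp, List.prefix_nil] at h
  exact hw h

lemma occursIn_subWa_iff {u ρ : List Bool} (hu : false ∈ u) {j : ℕ} :
    OccursIn (subWa u) (subWa ρ) j ↔ ∃ t, OccursIn u ρ t ∧ j = 2 * (t - 1) + 1 := by
  have hu₀ : u ≠ [] := List.ne_nil_of_mem hu
  simp only [occursIn_iff_prefix]
  constructor
  · rintro ⟨hj, hpre⟩
    have hlt := lt_length_of_prefix_drop (List.ne_nil_of_mem (false_mem_subWa u)) hpre
    rw [subWa_length] at hlt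
    obtain ⟨s, hs | hs⟩ := Nat.even_or_odd' (j - 1)
    · rw [hs, drop_two_mul_subWa (by omega), subWa_prefix_subWa_iff] at hpre
      exact ⟨s + 1, ⟨by omega, by simpa using hpre⟩, by omega⟩
    · rw [hs, ← List.tail_drop, drop_two_mul_subWa (by omega)] at hpre
      exact absurd hpre (not_subWa_prefix_tail_subWa hu _)
  · rintro ⟨t, ⟨ht, hpre⟩, rfl⟩
    have hlt := lt_length_of_prefix_drop hu₀ hpre
    refine ⟨by omega, ?_⟩
    rwa [Nat.add_sub_cancel, drop_two_mul_subWa hlt.le, subWa_prefix_subWa_iff]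

lemma setOf_occursIn_subWa {u ρ : List Bool} (hu : false ∈ u) :
    {j | OccursIn (subWa u) (subWa ρ) j} = (fun t => 2 * (t - 1) + 1) '' {t | OccursIn u ρ t} := by
  ext j
  simp [occursIn_subWa_iff hu, eq_comm]

lemma setOf_occursIn_iterate_subWa {u ρ : List Bool} (hu : false ∈ u) (n : ℕ) :
    {j | OccursIn (subWa^[n] u) (subWa^[n] ρ) j}
      = (fun t => 2 ^ n * (t - 1) + 1) '' {t | OccursIn u ρ t} := by
  induction n with
  | zero =>
    simp only [Function.iterate_zero, id_eq, pow_zero, one_mul]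
    exact ((Set.image_congr fun t ht => Nat.sub_add_cancel ht.1).trans (Set.image_id _)).symm
  | succ n ih =>
    have hmem : false ∈ subWa^[n] u := by
      cases n
      · exact hu
      · rw [Function.iterate_succ_apply']; exact false_mem_subWa _
    rw [Function.iterate_succ_apply', Function.iterate_succ_apply', setOf_occursIn_subWa hmem, ih,
      Set.image_image]
    congr! 2 with t
    rw [Nat.add_sub_cancel, pow_succ]
    ring

lemma setOf_occursIn_eq_coe {w τ : List Bool} {s : Finset ℕ} (hw : w ≠ [])
    (hs : (Finset.Icc 1 τ.length).filter (OccursIn w τ) = s) : {j | OccursIn w τ j} = s := by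
  ext j
  simp only [← hs, Finset.coe_filter, Finset.mem_Icc, Set.mem_ofPred_eq]
  constructor
  · intro h
    exact ⟨⟨h.1, by have := lt_length_of_prefix_drop hw (occursIn_iff_prefix.1 h).2; omega⟩, h⟩
  · exact And.right

end PD

/-- For every `m ≥ 1`: (1) `E m 1` occurs in `E (m+1) 1` at exactly the positions
`1` and `2^m+1`; (2) `E m 1` occurs in `E m 2` at exactly the positions `1` and
`2^(m-1)+1`; (3) `E m 2` occurs in `E (m+2) 1` at exactly the positions `2^m+1`
and `3·2^(m-1)+1`; (4) `E m 2` occurs in `E (m+2) 2` at exactly the positions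
`2^m+1`, `3·2^(m-1)+1`, `3·2^m+1` and `7·2^(m-1)+1`. -/
theorem doubling_envelope_positions (m : ℕ) (hm : 1 ≤ m) :
    {j : ℕ | OccursIn (E m 1) (E (m + 1) 1) j} = {1, 2 ^ m + 1} ∧
      {j : ℕ | OccursIn (E m 1) (E m 2) j} = {1, 2 ^ (m - 1) + 1} ∧
      {j : ℕ | OccursIn (E m 2) (E (m + 2) 1) j} = {2 ^ m + 1, 3 * 2 ^ (m - 1) + 1} ∧
      {j : ℕ | OccursIn (E m 2) (E (m + 2) 2) j}
        = {2 ^ m + 1, 3 * 2 ^ (m - 1) + 1, 3 * 2 ^ m + 1, 7 * 2 ^ (m - 1) + 1} := by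
  obtain ⟨k, rfl⟩ : ∃ k, m = k + 1 := ⟨m - 1, by omega⟩
  simp only [add_assoc, Nat.reduceAdd, Nat.add_sub_cancel]
  rw [E_one_add 1 k, E_one_add 2 k, E_one_add 3 k, E_two_add le_rfl k, E_two_add (by norm_num) k]
  have ha : false ∈ E 1 1 := by decide
  have haa : false ∈ E 1 2 := by decide
  -- `E 1 1 = a`, `E 2 1 = aba`, `E 3 1 = abaaaba`, `E 1 2 = aa`, `E 3 2 = abaaabaaaba`
  rw [setOf_occursIn_iterate_subWa ha, setOf_occursIn_iterate_subWa ha,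
    setOf_occursIn_iterate_subWa haa, setOf_occursIn_iterate_subWa haa,
    setOf_occursIn_eq_coe (s := {1, 3}) (by decide) (by decide),
    setOf_occursIn_eq_coe (s := {1, 2}) (by decide) (by decide),
    setOf_occursIn_eq_coe (s := {3, 4}) (by decide) (by decide),
    setOf_occursIn_eq_coe (s := {3, 4, 7, 8}) (by decide) (by decide)]
  simp only [Finset.coe_insert, Finset.coe_singleton, Set.image_insert_eq, Set.image_singleton]
  refine ⟨?_, ?_, ?_, ?_⟩ <;> ring_nf
end
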